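/- For an integer d ≥ 1 define the periodic dyadic shift s_d : (0,1] → (0,1] by s_d(t) := t + 2^{−d} for t ∈ (0, 1 − 2^{−d}] and s_d(t) := t + 2^{−d} − 1 for t ∈ (1 − 2^{−d}, 1]. Then a function g ∈ L₂((0,1], λ), with λ the Lebesgue measure, satisfies g ∘ s_d = g λ-almost everywhere for every d ≥ 1 if and only if g is λ-almost everywhere equal to a constant. -/

import Mathlib

/-!
If `g` is invariant under the dyadic shifts, its primitive `F x = ∫ t in 0..x, g t` satisfies
`F (x + 2⁻ᵈ) = F x + F 2⁻ᵈ`, so `F (k / 2ᵈ) = (k / 2ᵈ) • F 1` at every dyadic point of `[0, 1]`,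
and by continuity `F` is linear on `[0, 1]`. Lebesgue's differentiation theorem then forces
`g = F 1` almost everywhere. Conversely, `s_d` is a translation on each of two pieces, and
translations preserve Lebesgue-null sets.
-/

open MeasureTheory

/-- The periodic dyadic shift `s_d : (0,1] → (0,1]`:
`s_d t = t + 2^{-d}` for `t ∈ (0, 1 - 2^{-d}]` and `s_d t = t + 2^{-d} - 1` for
`t ∈ (1 - 2^{-d}, 1]` (the formula is extended to all of `ℝ`; only `(0,1]` matters). -/
noncomputable def sdShift (d : ℕ) (t : ℝ) : ℝ :=
  if t ≤ 1 - (2 ^ d : ℝ)⁻¹ then t + (2 ^ d : ℝ)⁻¹ else t + (2 ^ d : ℝ)⁻¹ - 1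

open Set Filter Topology intervalIntegral

section Primitive

variable {E : Type*} [NormedAddCommGroup E] [NormedSpace ℝ E]

theorem integral_zero_add_of_ae_shift_eq {f : ℝ → E} {x h : ℝ} (hx : 0 ≤ x) (hh : 0 ≤ h)
    (hf : IntervalIntegrable f volume 0 (x + h))
    (hshift : ∀ᵐ t, t ∈ Ioc 0 x → f (t + h) = f t) :
    ∫ t in 0..x + h, f t = (∫ t in 0..x, f t) + ∫ t in 0..h, f t := by
  have hsub : ∀ {a b}, a ∈ uIcc 0 (x + h) → b ∈ uIcc 0 (x + h) →
      IntervalIntegrable f volume a b := fun ha hb => hf.mono_set (uIcc_subset_uIcc ha hb)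
  have hmem : h ∈ uIcc 0 (x + h) := by rw [uIcc_of_le (by linarith)]; exact ⟨hh, by linarith⟩
  have htail : ∫ t in h..x + h, f t = ∫ t in 0..x, f t :=
    calc ∫ t in h..x + h, f t = ∫ t in 0..x, f (t + h) := by simp
      _ = ∫ t in 0..x, f t := integral_congr_ae (by rwa [uIoc_of_le hx])
  rw [← integral_add_adjacent_intervals (hsub left_mem_uIcc hmem) (hsub hmem right_mem_uIcc),
    htail, add_comm]

lemma map_natCast_mul_of_add {F : ℝ → E} {h : ℝ} (hF0 : F 0 = 0) (hh : 0 ≤ h)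
    (hadd : ∀ x ∈ Icc 0 (1 - h), F (x + h) = F x + F h) :
    ∀ k : ℕ, k * h ≤ 1 → F (k * h) = (k : ℝ) • F h
  | 0, _ => by simp [hF0]
  | k + 1, hk => by
    push_cast at hk
    have hkh : (k : ℝ) * h ∈ Icc 0 (1 - h) := ⟨by positivity, by linarith⟩
    rw [Nat.cast_succ, add_mul, one_mul, hadd _ hkh,
      map_natCast_mul_of_add hF0 hh hadd k (by linarith), add_smul, one_smul]

lemma eq_smul_of_add_dyadic {F : ℝ → E} (hF0 : F 0 = 0) (hcont : ContinuousOn F (Icc 0 1))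
    (hadd : ∀ d : ℕ, 1 ≤ d → ∀ x ∈ Icc 0 (1 - (2 ^ d : ℝ)⁻¹),
      F (x + (2 ^ d)⁻¹) = F x + F (2 ^ d)⁻¹) :
    ∀ x ∈ Icc (0 : ℝ) 1, F x = x • F 1 := by
  have hdyadic : ∀ d : ℕ, 1 ≤ d → ∀ k : ℕ, k ≤ 2 ^ d →
      F (k / 2 ^ d) = ((k : ℝ) / 2 ^ d) • F 1 := by
    intro d hd k hk
    have hmul := map_natCast_mul_of_add hF0 (by positivity) (hadd d hd)
    have hpos : (0 : ℝ) < 2 ^ d := by positivity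
    have hone : F 1 = (2 ^ d : ℝ) • F (2 ^ d)⁻¹ := by
      simpa [hpos.ne'] using hmul (2 ^ d) (by simp [hpos.ne'])
    have hk' : (k : ℝ) * (2 ^ d)⁻¹ ≤ 1 := by
      rw [← div_eq_mul_inv, div_le_one hpos]; exact_mod_cast hk
    rw [div_eq_mul_inv, hmul k hk', hone, smul_smul]
    congr 1
    field_simp
  intro x hx
  set a : ℕ → ℝ := fun n => (⌊x * 2 ^ n⌋₊ : ℝ) / 2 ^ n
  have hfloor : ∀ n : ℕ, ⌊x * 2 ^ n⌋₊ ≤ 2 ^ n := fun n =>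
    Nat.floor_le_of_le (by push_cast; nlinarith [hx.2, pow_pos (two_pos (α := ℝ)) n])
  have ha_mem : ∀ n, a n ∈ Icc (0 : ℝ) 1 := fun n =>
    ⟨by positivity, (div_le_one (by positivity)).2 (by exact_mod_cast hfloor n)⟩
  have ha : Tendsto a atTop (𝓝 x) :=
    (tendsto_nat_floor_mul_div_atTop hx.1).comp
      (tendsto_pow_atTop_atTop_of_one_lt one_lt_two)
  have hFa : Tendsto (fun n => F (a n)) atTop (𝓝 (F x)) :=
    (hcont x hx).tendsto.comp (tendsto_nhdsWithin_iff.2 ⟨ha, Eventually.of_forall ha_mem⟩)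
  refine tendsto_nhds_unique hFa ((ha.smul_const (F 1)).congr' ?_)
  filter_upwards [eventually_ge_atTop 1] with n hn
  exact (hdyadic n hn _ (hfloor n)).symm

lemma ae_eq_of_intervalIntegral_eq_sub_smul [CompleteSpace E] {f : ℝ → E} {a b : ℝ} {c : E}
    (hf : IntervalIntegrable f volume a b)
    (hlin : ∀ x ∈ Icc a b, ∫ t in a..x, f t = (x - a) • c) :
    ∀ᵐ x, x ∈ Ioo a b → f x = c := by
  filter_upwards [hf.ae_hasDerivAt_integral] with x hx hxab
  have hab : a ≤ b := (hxab.1.trans hxab.2).le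
  have hderiv := hx (by rw [uIcc_of_le hab]; exact Ioo_subset_Icc_self hxab) a left_mem_uIcc
  have haffine : HasDerivAt (fun y => (y - a) • c) c x := by
    simpa using ((hasDerivAt_id x).sub_const a).smul_const c
  exact hderiv.unique
    (haffine.congr_of_eventuallyEq (eventually_of_mem (Icc_mem_nhds hxab.1 hxab.2) hlin))

theorem ae_eq_integral_of_dyadic_shift_invariant [CompleteSpace E] {g : ℝ → E}
    (hg : IntervalIntegrable g volume 0 1)
    (hshift : ∀ d : ℕ, 1 ≤ d →
      ∀ᵐ t, t ∈ Ioc 0 (1 - (2 ^ d : ℝ)⁻¹) → g (t + (2 ^ d)⁻¹) = g t) :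
    ∀ᵐ t, t ∈ Ioo 0 1 → g t = ∫ s in 0..1, g s := by
  have hlin : ∀ x ∈ Icc (0 : ℝ) 1, ∫ t in 0..x, g t = x • ∫ t in 0..1, g t := by
    refine eq_smul_of_add_dyadic integral_same ?_ fun d hd x hx => ?_
    · simpa [uIcc_of_le zero_le_one] using continuousOn_primitive_interval' hg left_mem_uIcc
    · refine integral_zero_add_of_ae_shift_eq hx.1 (by positivity)
        (hg.mono_set (uIcc_subset_uIcc left_mem_uIcc ?_)) ?_
      · rw [uIcc_of_le zero_le_one]
        exact ⟨add_nonneg hx.1 (by positivity), by linarith [hx.2]⟩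
      · filter_upwards [hshift d hd] with t ht htx using ht ⟨htx.1, htx.2.trans hx.2⟩
  exact ae_eq_of_intervalIntegral_eq_sub_smul hg fun x hx => by simpa using hlin x hx

end Primitive

lemma sdShift_of_le {d : ℕ} {t : ℝ} (ht : t ≤ 1 - (2 ^ d : ℝ)⁻¹) :
    sdShift d t = t + (2 ^ d)⁻¹ :=
  if_pos ht

lemma sdShift_mem_Ioc (d : ℕ) {t : ℝ} (ht : t ∈ Ioc (0 : ℝ) 1) : sdShift d t ∈ Ioc (0 : ℝ) 1 := by
  have hpos : (0 : ℝ) < (2 ^ d)⁻¹ := by positivity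
  have hle : (2 ^ d : ℝ)⁻¹ ≤ 1 := inv_le_one_of_one_le₀ (one_le_pow₀ one_le_two)
  unfold sdShift
  split_ifs <;> constructor <;> linarith [ht.1, ht.2]

lemma ae_add_eq_of_comp_sdShift_ae_eq {β : Type*} {g : ℝ → β} {d : ℕ}
    (hg : (fun t => g (sdShift d t)) =ᵐ[volume.restrict (Ioc (0 : ℝ) 1)] g) :
    ∀ᵐ t, t ∈ Ioc 0 (1 - (2 ^ d : ℝ)⁻¹) → g (t + (2 ^ d)⁻¹) = g t := by
  filter_upwards [(ae_restrict_iff' measurableSet_Ioc).1 hg] with t ht htI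
  rw [← sdShift_of_le htI.2]
  exact ht ⟨htI.1, htI.2.trans (by simp)⟩

lemma comp_sdShift_ae_eq_of_ae_eq_const {β : Type*} {g : ℝ → β} {c : β} (d : ℕ)
    (hc : g =ᵐ[volume.restrict (Ioc (0 : ℝ) 1)] fun _ => c) :
    (fun t => g (sdShift d t)) =ᵐ[volume.restrict (Ioc (0 : ℝ) 1)] g := by
  have hc' : ∀ᵐ s, s ∈ Ioc (0 : ℝ) 1 → g s = c := (ae_restrict_iff' measurableSet_Ioc).1 hc
  have htranslate : ∀ a : ℝ, ∀ᵐ t, t + a ∈ Ioc (0 : ℝ) 1 → g (t + a) = c := fun a =>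
    (measurePreserving_add_right volume a).quasiMeasurePreserving.ae hc'
  rw [EventuallyEq, ae_restrict_iff' measurableSet_Ioc]
  filter_upwards [hc', htranslate (2 ^ d)⁻¹, htranslate ((2 ^ d)⁻¹ - 1)] with t h₀ h₁ h₂ ht
  have hmem := sdShift_mem_Ioc d ht
  rw [h₀ ht]
  unfold sdShift at hmem ⊢
  split_ifs at hmem ⊢
  · exact h₁ hmem
  · rw [add_sub_assoc] at hmem ⊢
    exact h₂ hmem

/-- a function `g ∈ L₂((0,1], λ)` satisfies `g ∘ s_d = g` λ-a.e. on `(0,1]`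
for every `d ≥ 1` if and only if `g` is λ-a.e. constant on `(0,1]`. -/
theorem stmt17 (g : ℝ → ℝ) (hg : MemLp g 2 (volume.restrict (Set.Ioc (0 : ℝ) 1))) :
    (∀ d : ℕ, 1 ≤ d →
        (fun t => g (sdShift d t)) =ᵐ[volume.restrict (Set.Ioc (0 : ℝ) 1)] g) ↔
      ∃ c : ℝ, g =ᵐ[volume.restrict (Set.Ioc (0 : ℝ) 1)] fun _ => c := by
  constructor
  · intro H
    have hg₁ : IntervalIntegrable g volume 0 1 :=
      (intervalIntegrable_iff_integrableOn_Ioc_of_le zero_le_one).2 (hg.integrable one_le_two)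
    refine ⟨∫ t in 0..1, g t, ?_⟩
    rw [EventuallyEq, ← Measure.restrict_congr_set Ioo_ae_eq_Ioc,
      ae_restrict_iff' measurableSet_Ioo]
    exact ae_eq_integral_of_dyadic_shift_invariant hg₁ fun d hd =>
      ae_add_eq_of_comp_sdShift_ae_eq (H d hd)
  · rintro ⟨c, hc⟩ d -
    exact comp_sdShift_ae_eq_of_ae_eq_const d hc
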